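/- arXiv:1809.04954 — 7 statements merged into one kernel-verified Lean document; each statement's English description precedes it below -/
import Mathlib

section
/- Let G = (V,E) be a finite simple graph, let Δ, U be real numbers with 0 < Δ < U, and let a be a natural number. Then G has an independent set of size at least a if and only if there exists a subset S ⊆ V whose MIS-Hamiltonian energy satisfies E(S) ≤ −a·Δ; equivalently, the minimum of E over all subsets of V is at most −a·Δ. -/
open scoped Classical

/-- The MIS-Hamiltonian energy of a configuration `S`:
`E(S) = -Δ·|S| + U·#{e ∈ E : both endpoints of e lie in S}`. -/
noncomputable def misEnergy {V : Type*} [Fintype V] [DecidableEq V]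
    (G : SimpleGraph V) [DecidableRel G.Adj] (Δ U : ℝ) (S : Finset V) : ℝ :=
  -Δ * S.card + U * ((G.edgeFinset.filter fun e => ∀ v ∈ e, v ∈ S).card : ℝ)

theorem mis_decision_iff_energy_threshold {V : Type*} [Fintype V] [DecidableEq V]
    (G : SimpleGraph V) [DecidableRel G.Adj] (Δ U : ℝ)
    (hΔ : 0 < Δ) (hU : Δ < U) (a : ℕ) :
    ((∃ S : Finset V, (∀ u ∈ S, ∀ v ∈ S, ¬ G.Adj u v) ∧ a ≤ S.card) ↔
      (∃ S : Finset V, misEnergy G Δ U S ≤ -(a : ℝ) * Δ)) ∧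
    ((∃ S : Finset V, (∀ u ∈ S, ∀ v ∈ S, ¬ G.Adj u v) ∧ a ≤ S.card) ↔
      sInf (Set.range (misEnergy G Δ U)) ≤ -(a : ℝ) * Δ) := by
  have key : ∀ n (S : Finset V),
      (G.edgeFinset.filter fun e => ∀ v ∈ e, v ∈ S).card = n →
      misEnergy G Δ U S ≤ -(a : ℝ) * Δ →
      ∃ T : Finset V, (∀ u ∈ T, ∀ v ∈ T, ¬ G.Adj u v) ∧ a ≤ T.card := by
    intro n
    induction n using Nat.strong_induction_on with
    | _ n ih =>
      intro S hn hE
      rcases Nat.eq_zero_or_pos n with h0 | hpos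
      · refine ⟨S, ?_, ?_⟩
        · intro u hu v hv hadj
          have hmem : s(u, v) ∈ G.edgeFinset.filter fun e => ∀ v ∈ e, v ∈ S := by
            refine Finset.mem_filter.mpr ⟨?_, ?_⟩
            · simpa [SimpleGraph.mem_edgeFinset] using hadj
            · intro w hw
              rcases Sym2.mem_iff.mp hw with rfl | rfl <;> assumption
          have : (G.edgeFinset.filter fun e => ∀ v ∈ e, v ∈ S).card ≠ 0 :=
            Finset.card_ne_zero_of_mem hmem
          exact this (hn.trans h0)
        · have hE' : -Δ * S.card ≤ -(a : ℝ) * Δ := by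
            have : ((G.edgeFinset.filter fun e => ∀ v ∈ e, v ∈ S).card : ℝ) = 0 := by
              rw [hn, h0]; norm_num
            simpa [misEnergy, this] using hE
          have : (a : ℝ) ≤ (S.card : ℝ) := by nlinarith
          exact_mod_cast this
      · obtain ⟨e, he⟩ := Finset.card_pos.mp (hn ▸ hpos)
        revert he
        refine Sym2.inductionOn e ?_
        intro u v he
        have hu : u ∈ S := (Finset.mem_filter.mp he).2 u (Sym2.mem_mk_left u v)
        have huS : u ∉ S.erase u := Finset.notMem_erase u S
        set S' := S.erase u with hS'
        have hsub : (G.edgeFinset.filter fun e => ∀ v ∈ e, v ∈ S') ⊆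
            (G.edgeFinset.filter fun e => ∀ v ∈ e, v ∈ S).erase s(u, v) := by
          intro e' he'
          rcases Finset.mem_filter.mp he' with ⟨he1, he2⟩
          refine Finset.mem_erase.mpr ⟨?_, Finset.mem_filter.mpr ⟨he1, ?_⟩⟩
          · rintro rfl
            exact huS (he2 u (Sym2.mem_mk_left u v))
          · intro w hw
            exact Finset.mem_of_mem_erase (he2 w hw)
        set m := (G.edgeFinset.filter fun e => ∀ v ∈ e, v ∈ S').card with hm
        have hmlt : m < n := by
          calc m ≤ ((G.edgeFinset.filter fun e => ∀ v ∈ e, v ∈ S).erase s(u, v)).card :=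
                Finset.card_le_card hsub
            _ < (G.edgeFinset.filter fun e => ∀ v ∈ e, v ∈ S).card :=
                Finset.card_erase_lt_of_mem he
            _ = n := hn
        have hcard : (S'.card : ℝ) = (S.card : ℝ) - 1 := by
          rw [hS', Finset.card_erase_of_mem hu]
          have : 1 ≤ S.card := Finset.card_pos.mpr ⟨u, hu⟩
          push_cast [Nat.cast_sub this]
          ring
        have hEle : misEnergy G Δ U S' ≤ misEnergy G Δ U S := by
          unfold misEnergy
          rw [hcard, ← hm, hn]
          have h1 : (m : ℝ) + 1 ≤ (n : ℝ) := by exact_mod_cast hmlt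
          nlinarith
        exact ih m hmlt S' rfl (hEle.trans hE)
  have fwd : (∃ S : Finset V, (∀ u ∈ S, ∀ v ∈ S, ¬ G.Adj u v) ∧ a ≤ S.card) →
      ∃ S : Finset V, misEnergy G Δ U S ≤ -(a : ℝ) * Δ := by
    rintro ⟨S, hind, hcard⟩
    refine ⟨S, ?_⟩
    have hempty : (G.edgeFinset.filter fun e => ∀ v ∈ e, v ∈ S) = ∅ := by
      refine Finset.eq_empty_of_forall_notMem ?_
      intro e he
      rcases Finset.mem_filter.mp he with ⟨he1, he2⟩
      revert he1 he2
      refine Sym2.inductionOn e ?_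
      intro x y he1 he2
      have hadj : G.Adj x y := by simpa [SimpleGraph.mem_edgeFinset] using he1
      exact hind x (he2 x (Sym2.mem_mk_left x y)) y (he2 y (Sym2.mem_mk_right x y)) hadj
    have hc : (a : ℝ) ≤ (S.card : ℝ) := by exact_mod_cast hcard
    simp only [misEnergy, hempty]
    norm_num
    nlinarith
  have bwd : (∃ S : Finset V, misEnergy G Δ U S ≤ -(a : ℝ) * Δ) →
      ∃ S : Finset V, (∀ u ∈ S, ∀ v ∈ S, ¬ G.Adj u v) ∧ a ≤ S.card := by
    rintro ⟨S, hS⟩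
    exact key _ S rfl hS
  have hne : (Set.range (misEnergy G Δ U)).Nonempty := ⟨_, ⟨∅, rfl⟩⟩
  have hfin : (Set.range (misEnergy G Δ U)).Finite := Set.finite_range _
  constructor
  · exact ⟨fwd, bwd⟩
  constructor
  · rintro hS
    obtain ⟨S, hS⟩ := fwd hS
    exact le_trans (csInf_le hfin.bddBelow ⟨S, rfl⟩) hS
  · intro h
    obtain ⟨S, hS⟩ := hne.csInf_mem hfin
    exact bwd ⟨S, hS ▸ h⟩
end

section
/- Let G = (V,E) be a finite simple graph and {u,v} ∈ E an edge. Let G' be the graph obtained from G by deleting the edge {u,v}, adding two new vertices w₁, w₂ (not in V), and adding the edges {u,w₁}, {w₁,w₂}, {w₂,v}. Then the independence number satisfies α(G') = α(G) + 1. -/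
open scoped Classical

noncomputable def indepNum {V : Type*} [Fintype V] (G : SimpleGraph V) : ℕ :=
  Finset.sup
    (Finset.univ.filter fun S : Finset V => ∀ u ∈ S, ∀ v ∈ S, ¬ G.Adj u v)
    Finset.card

def subdivideEdge {V : Type*} (G : SimpleGraph V) (u v : V) :
    SimpleGraph (V ⊕ Fin 2) :=
  SimpleGraph.fromRel fun a b =>
    (∃ x y : V, a = Sum.inl x ∧ b = Sum.inl y ∧ G.Adj x y ∧
      ¬((x = u ∧ y = v) ∨ (x = v ∧ y = u)))
    ∨ (a = Sum.inl u ∧ b = Sum.inr 0)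
    ∨ (a = Sum.inr 0 ∧ b = Sum.inr 1)
    ∨ (a = Sum.inr 1 ∧ b = Sum.inl v)

lemma adj_inl_inl {V : Type*} (G : SimpleGraph V) (u v x y : V) :
    (subdivideEdge G u v).Adj (Sum.inl x) (Sum.inl y) ↔
      G.Adj x y ∧ ¬((x = u ∧ y = v) ∨ (x = v ∧ y = u)) := by
  simp only [subdivideEdge, SimpleGraph.fromRel_adj, Sum.inl.injEq, ne_eq, reduceCtorEq,
    and_false, false_and, or_false, false_or]
  constructor
  · rintro ⟨hne, ⟨x', y', rfl, rfl, h, hn⟩ | ⟨x', y', rfl, rfl, h, hn⟩⟩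
    · exact ⟨h, hn⟩
    · exact ⟨h.symm, by tauto⟩
  · rintro ⟨h, hn⟩
    exact ⟨h.ne, Or.inl ⟨x, y, rfl, rfl, h, hn⟩⟩

lemma adj_inl_inr0 {V : Type*} (G : SimpleGraph V) (u v x : V) :
    (subdivideEdge G u v).Adj (Sum.inl x) (Sum.inr 0) ↔ x = u := by
  simp [subdivideEdge, SimpleGraph.fromRel_adj]

lemma adj_inl_inr1 {V : Type*} (G : SimpleGraph V) (u v x : V) :
    (subdivideEdge G u v).Adj (Sum.inl x) (Sum.inr 1) ↔ x = v := by
  simp [subdivideEdge, SimpleGraph.fromRel_adj]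

lemma adj_inr_inr {V : Type*} (G : SimpleGraph V) (u v : V) (i j : Fin 2) :
    (subdivideEdge G u v).Adj (Sum.inr i) (Sum.inr j) ↔ i ≠ j := by
  fin_cases i <;> fin_cases j <;>
    simp [subdivideEdge, SimpleGraph.fromRel_adj]

lemma indep_card_le {V : Type*} [Fintype V] (G : SimpleGraph V) (S : Finset V)
    (h : ∀ a ∈ S, ∀ b ∈ S, ¬ G.Adj a b) : S.card ≤ indepNum G :=
  Finset.le_sup (by simpa using h)

lemma indepNum_le {V : Type*} [Fintype V] (G : SimpleGraph V) (n : ℕ)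
    (h : ∀ S : Finset V, (∀ a ∈ S, ∀ b ∈ S, ¬ G.Adj a b) → S.card ≤ n) :
    indepNum G ≤ n :=
  Finset.sup_le fun S hS => h S (Finset.mem_filter.mp hS).2

lemma exists_indep {V : Type*} [Fintype V] (G : SimpleGraph V) :
    ∃ S : Finset V, (∀ a ∈ S, ∀ b ∈ S, ¬ G.Adj a b) ∧ S.card = indepNum G := by
  have hne : (Finset.univ.filter fun S : Finset V => ∀ u ∈ S, ∀ v ∈ S, ¬ G.Adj u v).Nonempty :=
    ⟨∅, Finset.mem_filter.mpr ⟨Finset.mem_univ _, fun a ha => absurd ha (Finset.notMem_empty a)⟩⟩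
  obtain ⟨S, hS, h⟩ := Finset.exists_mem_eq_sup _ hne Finset.card
  exact ⟨S, (Finset.mem_filter.mp hS).2, h.symm⟩

set_option maxHeartbeats 2000000 in
theorem indepNum_subdivideEdge {V : Type*} [Fintype V] [DecidableEq V]
    (G : SimpleGraph V) (u v : V) (huv : G.Adj u v) :
    indepNum (subdivideEdge G u v) = indepNum G + 1 := by
  apply le_antisymm
  · apply indepNum_le
    intro S' hind
    set S := S'.toLeft with hSdef
    set T := S'.toRight with hTdef
    have hmemS : ∀ x : V, x ∈ S ↔ Sum.inl x ∈ S' := fun x => Finset.mem_toLeft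
    have hmemT : ∀ i : Fin 2, i ∈ T ↔ Sum.inr i ∈ S' := fun i => Finset.mem_toRight
    have hcard : S.card + T.card = S'.card := Finset.card_toLeft_add_card_toRight
    by_cases hu : u ∈ S ∧ v ∈ S
    · have hT : T = ∅ := by
        rw [Finset.eq_empty_iff_forall_notMem]
        intro i hi
        fin_cases i
        · exact hind _ ((hmemS u).mp hu.1) _ ((hmemT 0).mp hi)
            ((adj_inl_inr0 G u v u).mpr rfl)
        · exact hind _ ((hmemS v).mp hu.2) _ ((hmemT 1).mp hi)
            ((adj_inl_inr1 G u v v).mpr rfl)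
      have herase : ∀ a ∈ S.erase u, ∀ b ∈ S.erase u, ¬ G.Adj a b := by
        intro a ha b hb hab
        refine hind _ ((hmemS a).mp (Finset.mem_of_mem_erase ha)) _
          ((hmemS b).mp (Finset.mem_of_mem_erase hb))
          ((adj_inl_inl G u v a b).mpr ⟨hab, ?_⟩)
        rintro (⟨rfl, rfl⟩ | ⟨rfl, rfl⟩)
        · exact Finset.ne_of_mem_erase ha rfl
        · exact Finset.ne_of_mem_erase hb rfl
      have h1 : (S.erase u).card ≤ indepNum G := indep_card_le G _ herase
      have h2 := Finset.card_erase_of_mem hu.1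
      have h3 : 1 ≤ S.card := Finset.card_pos.mpr ⟨u, hu.1⟩
      have h4 : T.card = 0 := by rw [hT, Finset.card_empty]
      omega
    · have hSind : ∀ a ∈ S, ∀ b ∈ S, ¬ G.Adj a b := by
        intro a ha b hb hab
        by_cases hn : (a = u ∧ b = v) ∨ (a = v ∧ b = u)
        · rcases hn with ⟨rfl, rfl⟩ | ⟨rfl, rfl⟩
          · exact hu ⟨ha, hb⟩
          · exact hu ⟨hb, ha⟩
        · exact hind _ ((hmemS a).mp ha) _ ((hmemS b).mp hb)
            ((adj_inl_inl G u v a b).mpr ⟨hab, hn⟩)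
      have h1 : S.card ≤ indepNum G := indep_card_le G _ hSind
      have h2 : T.card ≤ 1 := Finset.card_le_one.mpr (fun i hi j hj => by
        by_contra hij
        exact hind _ ((hmemT i).mp hi) _ ((hmemT j).mp hj)
          ((adj_inr_inr G u v i j).mpr hij))
      omega
  · obtain ⟨S, hS, hScard⟩ := exists_indep G
    by_cases hu : u ∈ S
    · have hv : v ∉ S := fun hv => hS u hu v hv huv
      set S' : Finset (V ⊕ Fin 2) :=
        insert (Sum.inr 1) (S.map ⟨Sum.inl, Sum.inl_injective⟩) with hS'def
      have hnotmem : (Sum.inr 1 : V ⊕ Fin 2) ∉ S.map ⟨Sum.inl, Sum.inl_injective⟩ := by simp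
      have hcard : S'.card = indepNum G + 1 := by
        rw [hS'def, Finset.card_insert_of_notMem hnotmem, Finset.card_map, hScard]
      have hind : ∀ a ∈ S', ∀ b ∈ S', ¬ (subdivideEdge G u v).Adj a b := by
        intro a ha b hb hab
        rw [hS'def, Finset.mem_insert, Finset.mem_map] at ha hb
        rcases ha with rfl | ⟨x, hx, rfl⟩ <;> rcases hb with rfl | ⟨y, hy, rfl⟩
        · exact (subdivideEdge G u v).irrefl hab
        · exact hv (by rwa [(adj_inl_inr1 G u v y).mp hab.symm] at hy)
        · exact hv (by rwa [(adj_inl_inr1 G u v x).mp hab] at hx)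
        · exact hS x hx y hy ((adj_inl_inl G u v x y).mp hab).1
      calc indepNum G + 1 = S'.card := hcard.symm
        _ ≤ indepNum (subdivideEdge G u v) := indep_card_le _ _ hind
    · set S' : Finset (V ⊕ Fin 2) :=
        insert (Sum.inr 0) (S.map ⟨Sum.inl, Sum.inl_injective⟩) with hS'def
      have hnotmem : (Sum.inr 0 : V ⊕ Fin 2) ∉ S.map ⟨Sum.inl, Sum.inl_injective⟩ := by simp
      have hcard : S'.card = indepNum G + 1 := by
        rw [hS'def, Finset.card_insert_of_notMem hnotmem, Finset.card_map, hScard]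
      have hind : ∀ a ∈ S', ∀ b ∈ S', ¬ (subdivideEdge G u v).Adj a b := by
        intro a ha b hb hab
        rw [hS'def, Finset.mem_insert, Finset.mem_map] at ha hb
        rcases ha with rfl | ⟨x, hx, rfl⟩ <;> rcases hb with rfl | ⟨y, hy, rfl⟩
        · exact (subdivideEdge G u v).irrefl hab
        · exact hu (by rwa [(adj_inl_inr0 G u v y).mp hab.symm] at hy)
        · exact hu (by rwa [(adj_inl_inr0 G u v x).mp hab] at hx)
        · exact hS x hx y hy ((adj_inl_inl G u v x y).mp hab).1
      calc indepNum G + 1 = S'.card := hcard.symm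
        _ ≤ indepNum (subdivideEdge G u v) := indep_card_le _ _ hind
end

section
/- Let G = (V,E) be a finite simple graph and for each edge e ∈ E let k_e be a positive integer. Let G' be the even subdivision of G in which every edge e = {u,v} is replaced by a path u — w^e_1 — w^e_2 — ⋯ — w^e_{2k_e} — v through 2k_e new vertices. Then α(G') = α(G) + Σ_{e∈E} k_e. -/
open scoped Classical

/-- The even subdivision of `G`: every edge `e = {fst e, snd e}` is replaced by a
path `fst e — w^e_0 — w^e_1 — ⋯ — w^e_{2k_e - 1} — snd e` through `2 * k e` new
vertices (the new vertices for edge `e` being `Sum.inr ⟨e, i⟩` for `i : Fin (2 * k e)`);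
in particular the original edge itself is removed. Here `fst, snd : G.edgeSet → V`
is any choice of orientation of the edges of `G`. -/
def evenSubdivision {V : Type*} (G : SimpleGraph V) (k : Sym2 V → ℕ)
    (fst snd : G.edgeSet → V) :
    SimpleGraph (V ⊕ Σ e : G.edgeSet, Fin (2 * k e)) :=
  SimpleGraph.fromRel fun a b =>
    (∃ (e : G.edgeSet) (i : Fin (2 * k e)), (i : ℕ) = 0 ∧
        a = Sum.inl (fst e) ∧ b = Sum.inr ⟨e, i⟩)
    ∨ (∃ (e : G.edgeSet) (i j : Fin (2 * k e)), (j : ℕ) = (i : ℕ) + 1 ∧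
        a = Sum.inr ⟨e, i⟩ ∧ b = Sum.inr ⟨e, j⟩)
    ∨ (∃ (e : G.edgeSet) (i : Fin (2 * k e)), (i : ℕ) = 2 * k e - 1 ∧
        a = Sum.inr ⟨e, i⟩ ∧ b = Sum.inl (snd e))

/-!
An independent set `T` of the subdivision occupies no two consecutive positions on the path of
an edge `e`, hence at most `k e` of its `2 k e` positions, and at most `k e - 1` when both ends
of `e` lie in `T`. Its trace `S` on `V` has `#S ≤ α(G) + #(edges inside S)`, because deleting an
endpoint of an edge inside `S` loses one vertex and at least one such edge. Summing gives
`α(G') ≤ α(G) + ∑ k e`. Conversely, a maximum independent set `S` of `G` extends by taking, on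
the path of each edge `e = uv` (oriented by `fst`, `snd`), the odd positions if `u ∈ S` and the
even ones otherwise: position `0` (next to `u`) is then only taken when `u ∉ S`, and the last
position (next to `v`) only when `u ∈ S`, so that `v ∉ S`.
-/

open Finset

theorem Finset.card_le_of_subset_Ico_of_succ_notMem {s : Finset ℕ} {a n : ℕ}
    (hs : s ⊆ Ico a (a + 2 * n)) (h : ∀ i ∈ s, i + 1 ∉ s) : #s ≤ n := by
  have hmaps : Set.MapsTo (fun i => (i - a) / 2) s (range n) := fun i hi => by
    have := mem_Ico.1 (hs hi)
    simp only [coe_range, Set.mem_Iio]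
    omega
  have hinj : Set.InjOn (fun i => (i - a) / 2) s := fun i hi j hj hij => by
    have := mem_Ico.1 (hs hi)
    have := mem_Ico.1 (hs hj)
    by_contra hne
    have : j = i + 1 ∨ i = j + 1 := by simp only at hij; omega
    rcases this with rfl | rfl
    · exact h i hi hj
    · exact h j hj hi
  simpa using card_le_card_of_injOn _ hmaps hinj

theorem Fin.card_filter_val_mod_two_eq (m : ℕ) {c : ℕ} (hc : c < 2) :
    #{i : Fin (2 * m) | (i : ℕ) % 2 = c} = m := by
  calc #{i : Fin (2 * m) | (i : ℕ) % 2 = c} = #(univ : Finset (Fin m)) := by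
        refine card_bij' (fun i _ => ⟨i / 2, by omega⟩) (fun j _ => ⟨2 * j + c, by omega⟩)
          ?_ ?_ ?_ ?_ <;> intro i hi <;> simp only [mem_filter, mem_univ, true_and] at hi ⊢
        · omega
        · ext; simp only; omega
        · ext; simp only; omega
    _ = m := card_fin m

theorem indepNum_eq_simpleGraph_indepNum {V : Type*} [Fintype V] (G : SimpleGraph V) :
    indepNum G = G.indepNum := by
  have hindep (S : Finset V) :
      (∀ u ∈ S, ∀ v ∈ S, ¬ G.Adj u v) ↔ G.IsIndepSet (S : Set V) :=
    ⟨fun h u hu v hv _ => h u hu v hv, fun h u hu v hv huv => h hu hv (G.ne_of_adj huv) huv⟩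
  apply le_antisymm
  · exact Finset.sup_le fun S hS => ((hindep S).1 (mem_filter.1 hS).2).card_le_indepNum
  · obtain ⟨S, hS⟩ := G.exists_isNIndepSet_indepNum
    rw [← hS.card_eq]
    exact Finset.le_sup (f := Finset.card)
      (mem_filter.2 ⟨mem_univ _, (hindep S).2 hS.isIndepSet⟩)

namespace SimpleGraph

variable {V : Type*} (G : SimpleGraph V) [Fintype G.edgeSet]

noncomputable def edgesWithin (S : Finset V) : Finset G.edgeSet :=
  {e | ∀ v ∈ (e : Sym2 V), v ∈ S}

theorem card_le_indepNum_add_card_edgesWithin [Fintype V] (S : Finset V) :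
    #S ≤ G.indepNum + #(G.edgesWithin S) := by
  induction S using Finset.strongInduction with
  | H S ih =>
  by_cases hS : G.IsIndepSet (S : Set V)
  · exact hS.card_le_indepNum.trans (Nat.le_add_right _ _)
  obtain ⟨u, hu, v, hv, -, huv⟩ : ∃ u ∈ S, ∃ v ∈ S, u ≠ v ∧ G.Adj u v := by
    simpa [IsIndepSet, Set.Pairwise] using hS
  let uv : G.edgeSet := ⟨s(u, v), huv⟩
  have huv_mem : uv ∈ G.edgesWithin S := by
    simp [edgesWithin, uv, hu, hv]
  have hsub : G.edgesWithin (S.erase u) ⊆ (G.edgesWithin S).erase uv := by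
    intro e he
    simp only [edgesWithin, mem_filter, mem_univ, true_and, mem_erase] at he ⊢
    refine ⟨?_, fun w hw => (he w hw).2⟩
    rintro rfl
    exact (he u (Sym2.mem_mk_left u v)).1 rfl
  calc #S = #(S.erase u) + 1 := (card_erase_add_one hu).symm
    _ ≤ G.indepNum + #(G.edgesWithin (S.erase u)) + 1 := by
      gcongr
      exact ih _ (erase_ssubset hu)
    _ ≤ G.indepNum + #((G.edgesWithin S).erase uv) + 1 := by
      gcongr
    _ = G.indepNum + #(G.edgesWithin S) := by
      rw [add_assoc, card_erase_add_one huv_mem]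

end SimpleGraph

section evenSubdivision

variable {V : Type*} {G : SimpleGraph V} {k : Sym2 V → ℕ} {fst snd : G.edgeSet → V}

theorem evenSubdivision_not_adj_inl_inl (u v : V) :
    ¬ (evenSubdivision G k fst snd).Adj (.inl u) (.inl v) := by
  simp [evenSubdivision]

theorem evenSubdivision_adj_inl_inr {u : V} {e : G.edgeSet} {i : Fin (2 * k e)} :
    (evenSubdivision G k fst snd).Adj (.inl u) (.inr ⟨e, i⟩) ↔
      (u = fst e ∧ (i : ℕ) = 0) ∨ (u = snd e ∧ (i : ℕ) = 2 * k e - 1) := by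
  simp only [evenSubdivision, SimpleGraph.fromRel_adj]
  aesop

theorem evenSubdivision_adj_inr_inr {e e' : G.edgeSet} {i : Fin (2 * k e)}
    {j : Fin (2 * k e')} :
    (evenSubdivision G k fst snd).Adj (.inr ⟨e, i⟩) (.inr ⟨e', j⟩) ↔
      e = e' ∧ ((j : ℕ) = i + 1 ∨ (i : ℕ) = j + 1) := by
  simp only [evenSubdivision, SimpleGraph.fromRel_adj]
  aesop

noncomputable def pathPositions (T : Finset (V ⊕ Σ e : G.edgeSet, Fin (2 * k e)))
    (e : G.edgeSet) : Finset ℕ :=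
  (T.toRight.preimage (Sigma.mk e) sigma_mk_injective.injOn).map Fin.valEmbedding

theorem mem_pathPositions {T : Finset (V ⊕ Σ e : G.edgeSet, Fin (2 * k e))}
    {e : G.edgeSet} {i : ℕ} :
    i ∈ pathPositions T e ↔ ∃ h : i < 2 * k e, .inr ⟨e, ⟨i, h⟩⟩ ∈ T := by
  simp [pathPositions, Fin.exists_iff]

section independent

variable {T : Finset (V ⊕ Σ e : G.edgeSet, Fin (2 * k e))}
  (hT : (evenSubdivision G k fst snd).IsIndepSet (T : Set _)) (e : G.edgeSet)
include hT

theorem succ_notMem_pathPositions {i : ℕ} (hi : i ∈ pathPositions T e) :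
    i + 1 ∉ pathPositions T e := by
  intro hi'
  obtain ⟨h, hiT⟩ := mem_pathPositions.1 hi
  obtain ⟨h', hiT'⟩ := mem_pathPositions.1 hi'
  exact hT hiT hiT' (by simp) (evenSubdivision_adj_inr_inr.2 ⟨rfl, Or.inl rfl⟩)

theorem card_pathPositions_le : #(pathPositions T e) ≤ k e := by
  refine card_le_of_subset_Ico_of_succ_notMem (a := 0) (fun i hi => ?_)
    fun i hi => succ_notMem_pathPositions hT e hi
  obtain ⟨h, -⟩ := mem_pathPositions.1 hi
  simp only [mem_Ico]
  omega

theorem card_pathPositions_add_one_le (hk : 1 ≤ k e) (hfst : .inl (fst e) ∈ T)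
    (hsnd : .inl (snd e) ∈ T) : #(pathPositions T e) + 1 ≤ k e := by
  suffices #(pathPositions T e) ≤ k e - 1 by omega
  refine card_le_of_subset_Ico_of_succ_notMem (a := 1) (fun i hi => ?_)
    fun i hi => succ_notMem_pathPositions hT e hi
  obtain ⟨h, hiT⟩ := mem_pathPositions.1 hi
  have hfirst : i ≠ 0 := fun hi0 =>
    hT hfst hiT (by simp) (evenSubdivision_adj_inl_inr.2 (.inl ⟨rfl, hi0⟩))
  have hlast : i ≠ 2 * k e - 1 := fun hil =>
    hT hsnd hiT (by simp) (evenSubdivision_adj_inl_inr.2 (.inr ⟨rfl, hil⟩))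
  simp only [mem_Ico]
  omega

end independent

variable [Fintype G.edgeSet]

theorem card_eq_card_toLeft_add_sum_card_pathPositions
    (T : Finset (V ⊕ Σ e : G.edgeSet, Fin (2 * k e))) :
    #T = #T.toLeft + ∑ e, #(pathPositions T e) := by
  rw [← card_toLeft_add_card_toRight,
    ← sigma_preimage_mk_of_subset T.toRight (subset_univ _), card_sigma]
  simp [pathPositions]

theorem indepNum_evenSubdivision_le [Fintype V] (hk : ∀ e ∈ G.edgeSet, 1 ≤ k e)
    (hends : ∀ e : G.edgeSet, (e : Sym2 V) = s(fst e, snd e)) :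
    (evenSubdivision G k fst snd).indepNum ≤ G.indepNum + ∑ e : G.edgeSet, k e := by
  obtain ⟨T, hT⟩ := (evenSubdivision G k fst snd).exists_isNIndepSet_indepNum
  have hpath (e : G.edgeSet) :
      #(pathPositions T e) + (if e ∈ G.edgesWithin T.toLeft then 1 else 0) ≤ k e := by
    split_ifs with h
    · simp only [SimpleGraph.edgesWithin, hends e, mem_filter, mem_univ, true_and, Sym2.mem_iff,
        forall_eq_or_imp, forall_eq, mem_toLeft] at h
      exact card_pathPositions_add_one_le hT.isIndepSet e (hk e e.2) h.1 h.2
    · exact card_pathPositions_le hT.isIndepSet e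
  calc (evenSubdivision G k fst snd).indepNum = #T.toLeft + ∑ e, #(pathPositions T e) := by
        rw [← hT.card_eq, card_eq_card_toLeft_add_sum_card_pathPositions]
    _ ≤ G.indepNum + #(G.edgesWithin T.toLeft) + ∑ e, #(pathPositions T e) := by
      gcongr
      exact G.card_le_indepNum_add_card_edgesWithin _
    _ = G.indepNum + ∑ e, (#(pathPositions T e) +
        if e ∈ G.edgesWithin T.toLeft then 1 else 0) := by
      rw [sum_add_distrib, sum_boole, filter_mem_eq_inter, univ_inter, Nat.cast_id]
      omega
    _ ≤ G.indepNum + ∑ e : G.edgeSet, k e := by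
      gcongr with e
      exact hpath e

variable (k fst) in
noncomputable def parityLift (S : Finset V) :
    Finset (V ⊕ Σ e : G.edgeSet, Fin (2 * k e)) :=
  S.disjSum (univ.sigma fun e => {i | (i : ℕ) % 2 = if fst e ∈ S then 1 else 0})

theorem card_parityLift (S : Finset V) :
    #(parityLift k fst S) = #S + ∑ e : G.edgeSet, k e := by
  simp only [parityLift, card_disjSum, card_sigma]
  congr 1
  refine sum_congr rfl fun e _ => Fin.card_filter_val_mod_two_eq _ ?_
  split_ifs <;> omega

theorem isIndepSet_parityLift (hadj : ∀ e, G.Adj (fst e) (snd e)) {S : Finset V}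
    (hS : G.IsIndepSet (S : Set V)) :
    (evenSubdivision G k fst snd).IsIndepSet (parityLift k fst S : Set _) := by
  have hinl_inr (u : V) (hu : u ∈ S) (e : G.edgeSet) (i : Fin (2 * k e))
      (hi : (i : ℕ) % 2 = if fst e ∈ S then 1 else 0) :
      ¬ (evenSubdivision G k fst snd).Adj (.inl u) (.inr ⟨e, i⟩) := by
    intro hui
    rcases evenSubdivision_adj_inl_inr.1 hui with ⟨rfl, hfirst⟩ | ⟨rfl, hlast⟩
    · rw [if_pos hu] at hi
      omega
    · have hfst : fst e ∈ S := by
        by_contra h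
        rw [if_neg h] at hi
        omega
      exact hS hfst hu (hadj e).ne (hadj e)
  rintro (u | ⟨e, i⟩) hx (v | ⟨e', j⟩) hy - hxy <;>
    simp only [parityLift, mem_coe, inl_mem_disjSum, inr_mem_disjSum, mem_sigma, mem_filter,
      mem_univ, true_and] at hx hy
  · exact evenSubdivision_not_adj_inl_inl u v hxy
  · exact hinl_inr u hx e' j hy hxy
  · exact hinl_inr v hy e i hx hxy.symm
  · obtain ⟨rfl, hij⟩ := evenSubdivision_adj_inr_inr.1 hxy
    omega

theorem le_indepNum_evenSubdivision [Fintype V] (hadj : ∀ e, G.Adj (fst e) (snd e)) :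
    G.indepNum + ∑ e : G.edgeSet, k e ≤ (evenSubdivision G k fst snd).indepNum := by
  obtain ⟨S, hS⟩ := G.exists_isNIndepSet_indepNum
  rw [← hS.card_eq, ← card_parityLift]
  exact (isIndepSet_parityLift hadj hS.isIndepSet).card_le_indepNum

end evenSubdivision

theorem indepNum_evenSubdivision_general {V : Type*} [Fintype V]
    (G : SimpleGraph V) [DecidableRel G.Adj]
    (k : Sym2 V → ℕ) (hk : ∀ e ∈ G.edgeSet, 1 ≤ k e)
    (fst snd : G.edgeSet → V)
    (hends : ∀ e : G.edgeSet, (e : Sym2 V) = s(fst e, snd e)) :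
    indepNum (evenSubdivision G k fst snd) = indepNum G + ∑ e : G.edgeSet, k e := by
  rw [indepNum_eq_simpleGraph_indepNum, indepNum_eq_simpleGraph_indepNum]
  have hadj (e : G.edgeSet) : G.Adj (fst e) (snd e) := by simpa [hends e] using e.2
  exact le_antisymm (indepNum_evenSubdivision_le hk hends) (le_indepNum_evenSubdivision hadj)

theorem indepNum_evenSubdivision {V : Type*} [Fintype V] [DecidableEq V]
    (G : SimpleGraph V) [DecidableRel G.Adj]
    (k : Sym2 V → ℕ) (hk : ∀ e ∈ G.edgeSet, 1 ≤ k e)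
    (fst snd : G.edgeSet → V)
    (hends : ∀ e : G.edgeSet, (e : Sym2 V) = s(fst e, snd e)) :
    indepNum (evenSubdivision G k fst snd) = indepNum G + ∑ e : G.edgeSet, k e :=
  indepNum_evenSubdivision_general G k hk fst snd hends
end

section
/- Let V be a finite set, x : V → ℝ² an injective assignment of positions, C > 0 and D > 0 real numbers, and Δ : V → ℝ detunings satisfying Δ_v < C/D⁶ for every v ∈ V. Define the classical Rydberg energy of a subset S ⊆ V by E(S) = −Σ_{v∈S} Δ_v + Σ_{{u,w}⊆S, u≠w} C/‖x_u − x_w‖⁶. If S ⊆ V contains two distinct elements u, w with ‖x_u − x_w‖ ≤ D, then E(S \ {u}) < E(S). Consequently, every subset minimizing E is an independent set of the unit disk graph on V with threshold D (the graph joining u and w whenever u ≠ w and ‖x_u − x_w‖ ≤ D). -/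
open scoped Classical

/-- The classical (Ω = 0) Rydberg energy of the configuration where exactly the
atoms in `S` are excited:
`E(S) = −Σ_{v∈S} Δ_v + Σ_{{u,w}⊆S, u≠w} C/‖x_u − x_w‖⁶`
(the sum over unordered pairs written as half the sum over ordered pairs). -/
noncomputable def rydbergEnergy {V : Type*} [Fintype V] [DecidableEq V]
    (x : V → EuclideanSpace ℝ (Fin 2)) (C : ℝ) (Δ : V → ℝ) (S : Finset V) : ℝ :=
  -∑ v ∈ S, Δ v + (∑ p ∈ S.offDiag, C / ‖x p.1 - x p.2‖ ^ 6) / 2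

/-- The unit disk graph on `V` with threshold `D`: distinct `u, w` are adjacent
exactly when `‖x u − x w‖ ≤ D`. -/
def unitDiskGraph {V : Type*} (x : V → EuclideanSpace ℝ (Fin 2)) (D : ℝ) :
    SimpleGraph V :=
  SimpleGraph.fromRel fun u w => ‖x u - x w‖ ≤ D

/-!
De-exciting `u ∈ S` lowers the energy by the interaction of `u` with the rest of `S` and
raises it by `Δ u`. All interactions are nonnegative, and a partner `w` at distance at most `D`
alone contributes `C / ‖x u - x w‖⁶ ≥ C / D⁶ > Δ u`, so the energy strictly drops. Hence a
minimizer contains no edge of the unit disk graph.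
-/

theorem Finset.sum_offDiag_insert {α M : Type*} [DecidableEq α] [AddCommMonoid M]
    {s : Finset α} {a : α} (ha : a ∉ s) (f : α × α → M) :
    ∑ p ∈ (insert a s).offDiag, f p =
      ∑ p ∈ s.offDiag, f p + ∑ b ∈ s, f (a, b) + ∑ b ∈ s, f (b, a) := by
  have hdisj_left : Disjoint s.offDiag ({a} ×ˢ s) :=
    Finset.disjoint_left.2 fun p hp hp' => by
      simp only [Finset.mem_offDiag, Finset.mem_product, Finset.mem_singleton] at hp hp'
      exact ha (hp'.1 ▸ hp.1)
  have hdisj_right : Disjoint (s.offDiag ∪ {a} ×ˢ s) (s ×ˢ {a}) :=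
    Finset.disjoint_left.2 fun p hp hp' => by
      simp only [Finset.mem_union, Finset.mem_offDiag, Finset.mem_product,
        Finset.mem_singleton] at hp hp'
      rcases hp with hp | hp
      · exact ha (hp'.2 ▸ hp.2.1)
      · exact ha (hp.1 ▸ hp'.1)
  rw [Finset.offDiag_insert ha, Finset.sum_union hdisj_right, Finset.sum_union hdisj_left,
    Finset.singleton_product, Finset.product_singleton, Finset.sum_map, Finset.sum_map]
  rfl

theorem unitDiskGraph_adj {V : Type*} {x : V → EuclideanSpace ℝ (Fin 2)} {D : ℝ} {u w : V} :
    (unitDiskGraph x D).Adj u w ↔ u ≠ w ∧ ‖x u - x w‖ ≤ D := by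
  rw [unitDiskGraph, SimpleGraph.fromRel_adj, norm_sub_rev (x w), or_self]

section Rydberg

variable {V : Type*} [Fintype V] [DecidableEq V]
  {x : V → EuclideanSpace ℝ (Fin 2)} {C D : ℝ} {Δ : V → ℝ}

theorem rydbergEnergy_insert {T : Finset V} {u : V} (hu : u ∉ T) :
    rydbergEnergy x C Δ (insert u T) =
      rydbergEnergy x C Δ T - Δ u + ∑ v ∈ T, C / ‖x u - x v‖ ^ 6 := by
  have hsymm : ∑ v ∈ T, C / ‖x v - x u‖ ^ 6 = ∑ v ∈ T, C / ‖x u - x v‖ ^ 6 := by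
    simp only [norm_sub_rev (x _) (x u)]
  simp only [rydbergEnergy]
  rw [Finset.sum_insert hu, Finset.sum_offDiag_insert hu, hsymm]
  ring

theorem rydbergEnergy_erase_lt (hx : Function.Injective x) (hC : 0 ≤ C) {S : Finset V}
    {u w : V} (hΔ : Δ u < C / D ^ 6) (hu : u ∈ S) (hw : w ∈ S) (huw : u ≠ w)
    (hclose : ‖x u - x w‖ ≤ D) :
    rydbergEnergy x C Δ (S.erase u) < rydbergEnergy x C Δ S := by
  have hdist : 0 < ‖x u - x w‖ := norm_pos_iff.2 (sub_ne_zero.2 (hx.ne huw))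
  have hinteraction : Δ u < ∑ v ∈ S.erase u, C / ‖x u - x v‖ ^ 6 :=
    calc Δ u < C / D ^ 6 := hΔ
      _ ≤ C / ‖x u - x w‖ ^ 6 :=
        div_le_div_of_nonneg_left hC (pow_pos hdist 6) (pow_le_pow_left₀ hdist.le hclose 6)
      _ ≤ ∑ v ∈ S.erase u, C / ‖x u - x v‖ ^ 6 :=
        Finset.single_le_sum (f := fun v => C / ‖x u - x v‖ ^ 6) (fun v _ => by positivity)
          (Finset.mem_erase.2 ⟨huw.symm, hw⟩)
  conv_rhs => rw [← Finset.insert_erase hu]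
  rw [rydbergEnergy_insert (Finset.notMem_erase u S)]
  linarith

end Rydberg

theorem rydberg_ground_state_is_independent_general {V : Type*} [Fintype V] [DecidableEq V]
    (x : V → EuclideanSpace ℝ (Fin 2)) (hx : Function.Injective x)
    (C D : ℝ) (hC : 0 < C)
    (Δ : V → ℝ) (hΔ : ∀ v, Δ v < C / D ^ 6) :
    (∀ S : Finset V, ∀ u ∈ S, ∀ w ∈ S, u ≠ w → ‖x u - x w‖ ≤ D →
      rydbergEnergy x C Δ (S.erase u) < rydbergEnergy x C Δ S) ∧
    (∀ S : Finset V,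
      (∀ T : Finset V, rydbergEnergy x C Δ S ≤ rydbergEnergy x C Δ T) →
      ∀ u ∈ S, ∀ w ∈ S, ¬ (unitDiskGraph x D).Adj u w) := by
  have herase : ∀ S : Finset V, ∀ u ∈ S, ∀ w ∈ S, u ≠ w → ‖x u - x w‖ ≤ D →
      rydbergEnergy x C Δ (S.erase u) < rydbergEnergy x C Δ S :=
    fun S u hu w hw huw hclose => rydbergEnergy_erase_lt hx hC.le (hΔ u) hu hw huw hclose
  refine ⟨herase, fun S hmin u hu w hw hadj => ?_⟩
  obtain ⟨huw, hclose⟩ := unitDiskGraph_adj.1 hadj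
  exact (herase S u hu w hw huw hclose).not_ge (hmin _)

theorem rydberg_ground_state_is_independent {V : Type*} [Fintype V] [DecidableEq V]
    (x : V → EuclideanSpace ℝ (Fin 2)) (hx : Function.Injective x)
    (C D : ℝ) (hC : 0 < C) (hD : 0 < D)
    (Δ : V → ℝ) (hΔ : ∀ v, Δ v < C / D ^ 6) :
    (∀ S : Finset V, ∀ u ∈ S, ∀ w ∈ S, u ≠ w → ‖x u - x w‖ ≤ D →
      rydbergEnergy x C Δ (S.erase u) < rydbergEnergy x C Δ S) ∧
    (∀ S : Finset V,
      (∀ T : Finset V, rydbergEnergy x C Δ S ≤ rydbergEnergy x C Δ T) →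
      ∀ u ∈ S, ∀ w ∈ S, ¬ (unitDiskGraph x D).Adj u w) :=
  rydberg_ground_state_is_independent_general x hx C D hC Δ hΔ
end

section
/- Let d > 0 and g > 0 be real numbers. Then Σ_{j=1}^∞ Σ_{i=1}^∞ 8/(d²i² + g²j²)³ + Σ_{i=0}^∞ 4/(i·d + g)⁶ ≤ (1/d⁶)·( (3π·ζ(5))/2 + 4/5 + 4·(d/g) )·(d/g)⁵, where ζ(5) = Σ_{n=1}^∞ 1/n⁵ is the Riemann zeta value at 5. In particular all the series involved converge. -/
/-!
Both sums are compared with integrals of decreasing functions. For fixed `j`, the column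
`Σ_{i≥1} 1/(d²i² + a²)³` with `a = g j` is at most `∫₀^∞ dx/(d²x² + a²)³ = 3π/(16 d a⁵)`, computed
from the primitive `3/8 arctan x + 3/8 x/(1+x²) + 1/4 x/(1+x²)²` of `(1+x²)⁻³`; summing the
columns over `j` produces `ζ(5)`. The line sum is its first term `4/g⁶` plus at most
`4 ∫₀^∞ dx/(xd + g)⁶ = 4/(5 d g⁵)`.
-/

open Real Filter Set Topology

noncomputable def primitiveInvOneAddSqCube (x : ℝ) : ℝ :=
  3 / 8 * arctan x + 3 / 8 * (x / (1 + x ^ 2)) + 1 / 4 * (x / (1 + x ^ 2) ^ 2)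

lemma hasDerivAt_primitiveInvOneAddSqCube (x : ℝ) :
    HasDerivAt primitiveInvOneAddSqCube (1 / (1 + x ^ 2) ^ 3) x := by
  have hne : (1 + x ^ 2 : ℝ) ≠ 0 := by positivity
  have hden : HasDerivAt (fun x : ℝ => 1 + x ^ 2) (2 * x) x := by
    simpa using (hasDerivAt_pow 2 x).const_add 1
  have h1 := (hasDerivAt_id' x).div hden hne
  have h2 := (hasDerivAt_id' x).div (hden.fun_pow 2) (pow_ne_zero 2 hne)
  refine ((((hasDerivAt_arctan x).const_mul (3 / 8 : ℝ)).add (h1.const_mul (3 / 8 : ℝ))).add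
    (h2.const_mul (1 / 4 : ℝ))).congr_deriv ?_
  field_simp
  ring

lemma tendsto_div_one_add_sq_pow_atTop {k : ℕ} (hk : k ≠ 0) :
    Tendsto (fun x : ℝ => x / (1 + x ^ 2) ^ k) atTop (𝓝 0) := by
  refine squeeze_zero' ?_ ?_ tendsto_inv_atTop_zero
  · filter_upwards [eventually_ge_atTop 0] with x hx
    positivity
  · filter_upwards [eventually_gt_atTop 0] with x hx
    have hsq : 1 + x ^ 2 ≤ (1 + x ^ 2) ^ k := le_self_pow₀ (by nlinarith) hk
    rw [div_le_iff₀ (by positivity), inv_mul_eq_div, le_div_iff₀ hx]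
    nlinarith

lemma tendsto_primitiveInvOneAddSqCube_atTop :
    Tendsto primitiveInvOneAddSqCube atTop (𝓝 (3 * π / 16)) := by
  have harctan := (tendsto_arctan_atTop.mono_right nhdsWithin_le_nhds).const_mul (3 / 8 : ℝ)
  have h1 := (tendsto_div_one_add_sq_pow_atTop one_ne_zero).const_mul (3 / 8 : ℝ)
  have h2 := (tendsto_div_one_add_sq_pow_atTop two_ne_zero).const_mul (1 / 4 : ℝ)
  convert (harctan.add h1).add h2 using 2
  · simp [primitiveInvOneAddSqCube]
  · ring

lemma primitiveInvOneAddSqCube_le (x : ℝ) : primitiveInvOneAddSqCube x ≤ 3 * π / 16 :=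
  (monotone_of_deriv_nonneg (fun x => (hasDerivAt_primitiveInvOneAddSqCube x).differentiableAt)
    (fun x => by rw [(hasDerivAt_primitiveInvOneAddSqCube x).deriv]; positivity)).ge_of_tendsto
    tendsto_primitiveInvOneAddSqCube_atTop x

lemma sum_range_le_sub_of_hasDerivAt {f F : ℝ → ℝ} {M : ℝ} (hf : AntitoneOn f (Ici 0))
    (hF : ∀ x, 0 ≤ x → HasDerivAt F (f x) x) (hM : ∀ x, 0 ≤ x → F x ≤ M) (N : ℕ) :
    ∑ i ∈ Finset.range N, f (i + 1) ≤ M - F 0 := by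
  have hfN : AntitoneOn f (Icc 0 (0 + N)) := hf.mono Icc_subset_Ici_self
  calc ∑ i ∈ Finset.range N, f (i + 1) = ∑ i ∈ Finset.range N, f (0 + ↑(i + 1)) := by simp
    _ ≤ ∫ x in (0 : ℝ)..0 + N, f x := hfN.sum_le_integral
    _ = F N - F 0 := by
      rw [zero_add] at hfN ⊢
      refine intervalIntegral.integral_eq_sub_of_hasDerivAt (fun x hx => hF x ?_) ?_
      · rw [uIcc_of_le (Nat.cast_nonneg N)] at hx
        exact hx.1
      · exact (hfN.mono (uIcc_of_le (Nat.cast_nonneg N)).subset).intervalIntegrable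
    _ ≤ M - F 0 := by linarith [hM N (Nat.cast_nonneg N)]

lemma summable_and_tsum_le_sub_of_hasDerivAt {f F : ℝ → ℝ} {M : ℝ} (hf : AntitoneOn f (Ici 0))
    (hf₀ : ∀ x, 0 ≤ x → 0 ≤ f x) (hF : ∀ x, 0 ≤ x → HasDerivAt F (f x) x)
    (hM : ∀ x, 0 ≤ x → F x ≤ M) :
    Summable (fun i : ℕ => f (i + 1)) ∧ ∑' i : ℕ, f (i + 1) ≤ M - F 0 := by
  have hnonneg (i : ℕ) : 0 ≤ f (i + 1) := hf₀ _ (by positivity)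
  have hbound := sum_range_le_sub_of_hasDerivAt hf hF hM
  exact ⟨summable_of_sum_range_le hnonneg hbound, Real.tsum_le_of_sum_range_le hnonneg hbound⟩

lemma summable_and_tsum_one_div_sq_add_sq_pow_three_le {c a : ℝ} (hc : 0 < c) (ha : 0 < a) :
    Summable (fun i : ℕ => 1 / (c ^ 2 * ((i : ℝ) + 1) ^ 2 + a ^ 2) ^ 3) ∧
    ∑' i : ℕ, 1 / (c ^ 2 * ((i : ℝ) + 1) ^ 2 + a ^ 2) ^ 3 ≤ 3 * π / (16 * c * a ^ 5) := by
  set F : ℝ → ℝ := fun x => primitiveInvOneAddSqCube (c * x / a) / (c * a ^ 5)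
  have hanti : AntitoneOn (fun x : ℝ => 1 / (c ^ 2 * x ^ 2 + a ^ 2) ^ 3) (Ici 0) := by
    intro x hx y _ hxy
    have hx : 0 ≤ x := hx
    dsimp only
    gcongr
  have hderiv (x : ℝ) : HasDerivAt F (1 / (c ^ 2 * x ^ 2 + a ^ 2) ^ 3) x := by
    have hlin : HasDerivAt (fun x : ℝ => c * x / a) (c / a) x := by
      simpa using ((hasDerivAt_id x).const_mul c).div_const a
    refine (((hasDerivAt_primitiveInvOneAddSqCube _).comp x hlin).div_const _).congr_deriv ?_
    field_simp
    ring
  have hbound (x : ℝ) : F x ≤ 3 * π / (16 * c * a ^ 5) := by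
    calc F x ≤ 3 * π / 16 / (c * a ^ 5) :=
          div_le_div_of_nonneg_right (primitiveInvOneAddSqCube_le _) (by positivity)
      _ = 3 * π / (16 * c * a ^ 5) := by ring
  have hF₀ : F 0 = 0 := by simp [F, primitiveInvOneAddSqCube]
  simpa [hF₀] using summable_and_tsum_le_sub_of_hasDerivAt hanti (fun x _ => by positivity)
    (fun x _ => hderiv x) (fun x _ => hbound x)

lemma summable_and_tsum_one_div_mul_add_pow_six_le {d g : ℝ} (hd : 0 < d) (hg : 0 < g) :
    Summable (fun i : ℕ => 1 / (((i : ℝ) + 1) * d + g) ^ 6) ∧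
    ∑' i : ℕ, 1 / (((i : ℝ) + 1) * d + g) ^ 6 ≤ 1 / (5 * d * g ^ 5) := by
  set F : ℝ → ℝ := fun x => -(1 / (5 * d)) * ((x * d + g) ^ 5)⁻¹
  have hanti : AntitoneOn (fun x : ℝ => 1 / (x * d + g) ^ 6) (Ici 0) := by
    intro x hx y _ hxy
    have hx : 0 ≤ x := hx
    dsimp only
    gcongr
  have hderiv (x : ℝ) (hx : 0 ≤ x) : HasDerivAt F (1 / (x * d + g) ^ 6) x := by
    have hlin : HasDerivAt (fun x : ℝ => x * d + g) d x := by
      simpa using ((hasDerivAt_id x).mul_const d).add_const g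
    refine (((hlin.fun_pow 5).inv (by positivity)).const_mul _).congr_deriv ?_
    field_simp
    ring
  have hbound (x : ℝ) (hx : 0 ≤ x) : F x ≤ 0 := by
    simp only [F, neg_mul, neg_nonpos]
    positivity
  have hF₀ : F 0 = -(1 / (5 * d * g ^ 5)) := by
    simp only [F]
    field_simp
    ring
  simpa [hF₀] using summable_and_tsum_le_sub_of_hasDerivAt hanti
    (fun x hx => (one_div_pos.2 (pow_pos (by positivity) 6)).le) hderiv hbound

lemma summable_and_tsum_le_of_summable_fiberwise {β γ : Type*} {f : β × γ → ℝ} (hf : 0 ≤ f)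
    {b : γ → ℝ} (hfiber : ∀ y, Summable (fun x => f (x, y)) ∧ ∑' x, f (x, y) ≤ b y)
    (hb : Summable b) : Summable f ∧ ∑' p, f p ≤ ∑' y, b y := by
  set f' : γ × β → ℝ := fun q => f q.swap
  have hfiber_sum : Summable fun y => ∑' x, f (x, y) :=
    hb.of_nonneg_of_le (fun y => tsum_nonneg fun x => hf (x, y)) fun y => (hfiber y).2
  have hf' : Summable f' :=
    (summable_prod_of_nonneg fun q => hf q.swap).2 ⟨fun y => (hfiber y).1, hfiber_sum⟩
  refine ⟨hf'.prod_symm, ?_⟩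
  calc ∑' p, f p = ∑' q, f' q := ((Equiv.prodComm γ β).tsum_eq f).symm
    _ = ∑' (y) (x), f (x, y) := hf'.tsum_prod' fun y => (hfiber y).1
    _ ≤ ∑' y, b y := hfiber_sum.tsum_le_tsum (fun y => (hfiber y).2) hb

lemma summable_one_div_nat_add_one_pow {p : ℕ} (hp : 1 < p) :
    Summable (fun n : ℕ => 1 / ((n : ℝ) + 1) ^ p) := by
  simpa using (summable_nat_add_iff 1).2 (Real.summable_one_div_nat_pow.2 hp)

lemma summable_and_tsum_lattice_le {d g : ℝ} (hd : 0 < d) (hg : 0 < g) :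
    Summable (fun p : ℕ × ℕ =>
      8 / (d ^ 2 * ((p.1 : ℝ) + 1) ^ 2 + g ^ 2 * ((p.2 : ℝ) + 1) ^ 2) ^ 3) ∧
    ∑' p : ℕ × ℕ, 8 / (d ^ 2 * ((p.1 : ℝ) + 1) ^ 2 + g ^ 2 * ((p.2 : ℝ) + 1) ^ 2) ^ 3
      ≤ 3 * π / (2 * d * g ^ 5) * ∑' n : ℕ, 1 / ((n : ℝ) + 1) ^ 5 := by
  have hcolumn (j : ℕ) :
      Summable (fun i : ℕ => 8 / (d ^ 2 * ((i : ℝ) + 1) ^ 2 + g ^ 2 * ((j : ℝ) + 1) ^ 2) ^ 3) ∧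
      ∑' i : ℕ, 8 / (d ^ 2 * ((i : ℝ) + 1) ^ 2 + g ^ 2 * ((j : ℝ) + 1) ^ 2) ^ 3
        ≤ 3 * π / (2 * d * g ^ 5) * (1 / ((j : ℝ) + 1) ^ 5) := by
    obtain ⟨hsum, hle⟩ :=
      summable_and_tsum_one_div_sq_add_sq_pow_three_le hd (a := g * ((j : ℝ) + 1)) (by positivity)
    have hterm : (fun i : ℕ => 8 / (d ^ 2 * ((i : ℝ) + 1) ^ 2 + g ^ 2 * ((j : ℝ) + 1) ^ 2) ^ 3) =
        fun i : ℕ => 8 * (1 / (d ^ 2 * ((i : ℝ) + 1) ^ 2 + (g * ((j : ℝ) + 1)) ^ 2) ^ 3) := by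
      ext i
      ring
    rw [hterm, tsum_mul_left]
    refine ⟨hsum.mul_left 8, (mul_le_mul_of_nonneg_left hle (by norm_num)).trans_eq ?_⟩
    field_simp
    ring
  rw [← tsum_mul_left]
  exact summable_and_tsum_le_of_summable_fiberwise (fun p => by positivity) hcolumn
    ((summable_one_div_nat_add_one_pow (by norm_num)).mul_left _)

lemma summable_and_tsum_line_le {d g : ℝ} (hd : 0 < d) (hg : 0 < g) :
    Summable (fun i : ℕ => 4 / ((i : ℝ) * d + g) ^ 6) ∧
    ∑' i : ℕ, 4 / ((i : ℝ) * d + g) ^ 6 ≤ 4 / g ^ 6 + 4 / (5 * d * g ^ 5) := by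
  obtain ⟨hsum, hle⟩ := summable_and_tsum_one_div_mul_add_pow_six_le hd hg
  have hshift : (fun i : ℕ => 4 / (((i + 1 : ℕ) : ℝ) * d + g) ^ 6) =
      fun i : ℕ => 4 * (1 / (((i : ℝ) + 1) * d + g) ^ 6) := by
    ext i
    push_cast
    ring
  have hsum' : Summable (fun i : ℕ => 4 / ((i : ℝ) * d + g) ^ 6) :=
    (summable_nat_add_iff 1).1 (hshift ▸ hsum.mul_left 4)
  refine ⟨hsum', ?_⟩
  rw [hsum'.tsum_eq_zero_add, hshift, tsum_mul_left]
  simp only [Nat.cast_zero, zero_mul, zero_add]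
  have h4 := mul_le_mul_of_nonneg_left hle (by norm_num : (0 : ℝ) ≤ 4)
  rw [mul_one_div] at h4
  linarith

/-- Bound on the interaction energy (in units of the van der Waals coefficient `C`)
of a single excited atom with all distant atoms:
`Σ_{j≥1} Σ_{i≥1} 8/(d²i² + g²j²)³ + Σ_{i≥0} 4/(i·d + g)⁶
  ≤ (1/d⁶)·(3π·ζ(5)/2 + 4/5 + 4·(d/g))·(d/g)⁵`. -/
theorem distant_interaction_bound (d g : ℝ) (hd : 0 < d) (hg : 0 < g) :
    Summable (fun p : ℕ × ℕ =>
      8 / (d ^ 2 * ((p.1 : ℝ) + 1) ^ 2 + g ^ 2 * ((p.2 : ℝ) + 1) ^ 2) ^ 3) ∧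
    Summable (fun i : ℕ => 4 / ((i : ℝ) * d + g) ^ 6) ∧
    Summable (fun n : ℕ => 1 / ((n : ℝ) + 1) ^ 5) ∧
    (∑' p : ℕ × ℕ,
        8 / (d ^ 2 * ((p.1 : ℝ) + 1) ^ 2 + g ^ 2 * ((p.2 : ℝ) + 1) ^ 2) ^ 3)
      + (∑' i : ℕ, 4 / ((i : ℝ) * d + g) ^ 6)
    ≤ (1 / d ^ 6) *
        ((3 * Real.pi * (∑' n : ℕ, 1 / ((n : ℝ) + 1) ^ 5)) / 2
          + 4 / 5 + 4 * (d / g)) * (d / g) ^ 5 := by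
  obtain ⟨hlattice, hlattice_le⟩ := summable_and_tsum_lattice_le hd hg
  obtain ⟨hline, hline_le⟩ := summable_and_tsum_line_le hd hg
  refine ⟨hlattice, hline, summable_one_div_nat_add_one_pow (by norm_num), ?_⟩
  calc _ ≤ 3 * π / (2 * d * g ^ 5) * (∑' n : ℕ, 1 / ((n : ℝ) + 1) ^ 5)
        + (4 / g ^ 6 + 4 / (5 * d * g ^ 5)) := add_le_add hlattice_le hline_le
    _ = _ := by
      field_simp
      ring
end

section
/- The double series Σ_{r=1}^∞ Σ_{s=1}^∞ [ 1/(2r + 2s − 2)⁶ − 1/(2r + 2s − 1)⁶ ] converges (each bracketed term being positive) and its value lies strictly between 0.0146 and 0.0147. -/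
/-!
The summand depends only on `n = r + s - 2`, and exactly `n + 1` pairs `(r, s)` share a given `n`,
so the double series is the single series `∑ₙ (n + 1) wₙ` with
`wₙ = 1/(2n+2)⁶ - 1/(2n+3)⁶ > 0`. Its terms satisfy `(n + 1) wₙ ≤ 1/(2(2n+2)⁵)`, which by convexity of
`x ↦ x⁻⁴` is at most the telescoping difference `vₙ - vₙ₊₁` with `vₙ = 1/(16(2n+1)⁴)`. Hence the
series converges, and its value lies between the sum of its first three terms and that sum
plus `v₃ = 1/456976`; both bounds are rational and fall inside `(0.0146, 0.0147)`.
-/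

open Finset

section Telescoping

variable {f u : ℕ → ℝ}

theorem sum_range_le_of_le_sub_succ (hu : ∀ n, 0 ≤ u n) (hfu : ∀ n, f n ≤ u n - u (n + 1))
    (n : ℕ) : ∑ i ∈ range n, f i ≤ u 0 :=
  calc ∑ i ∈ range n, f i ≤ ∑ i ∈ range n, (u i - u (i + 1)) := sum_le_sum fun i _ ↦ hfu i
    _ = u 0 - u n := sum_range_sub' u n
    _ ≤ u 0 := sub_le_self _ (hu n)

theorem summable_of_le_sub_succ (hf : ∀ n, 0 ≤ f n) (hu : ∀ n, 0 ≤ u n)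
    (hfu : ∀ n, f n ≤ u n - u (n + 1)) : Summable f :=
  summable_of_sum_range_le hf (sum_range_le_of_le_sub_succ hu hfu)

theorem tsum_le_of_le_sub_succ (hf : ∀ n, 0 ≤ f n) (hu : ∀ n, 0 ≤ u n)
    (hfu : ∀ n, f n ≤ u n - u (n + 1)) : ∑' n, f n ≤ u 0 :=
  Real.tsum_le_of_sum_range_le hf (sum_range_le_of_le_sub_succ hu hfu)

end Telescoping

theorem HasSum.prod_comp_add {f : ℕ → ℝ} (hf : ∀ n, 0 ≤ f n) {a : ℝ}
    (h : HasSum (fun n : ℕ ↦ (n + 1) * f n) a) :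
    HasSum (fun p : ℕ × ℕ ↦ f (p.1 + p.2)) a := by
  let e := Finset.HasAntidiagonal.sigmaAntidiagonalEquivProd (A := ℕ)
  have hcomp : (fun p : ℕ × ℕ ↦ f (p.1 + p.2)) ∘ e = fun x ↦ f x.1 := by
    ext ⟨n, kl, hkl⟩
    simp [e, mem_antidiagonal.mp hkl]
  have hfiber (n : ℕ) : HasSum (fun _ : antidiagonal n ↦ f n) ((n + 1) * f n) := by
    simpa using hasSum_fintype (fun _ : antidiagonal n ↦ f n)
  have hsum : Summable fun x : (Σ n : ℕ, antidiagonal n) ↦ f x.1 :=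
    (summable_sigma_of_nonneg fun x ↦ hf x.1).2
      ⟨fun n ↦ (hfiber n).summable, by simpa only [(hfiber _).tsum_eq] using h.summable⟩
  rw [← e.hasSum_iff, hcomp, h.unique (hsum.hasSum.sigma hfiber)]
  exact hsum.hasSum

noncomputable def wallTerm (n : ℕ) : ℝ := 1 / (2 * n + 2) ^ 6 - 1 / (2 * n + 3) ^ 6

noncomputable def wallMajorant (n : ℕ) : ℝ := 1 / (16 * (2 * n + 1) ^ 4)

theorem wallTerm_pos (n : ℕ) : 0 < wallTerm n :=
  sub_pos.2 <| one_div_lt_one_div_of_lt (by positivity) <|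
    pow_lt_pow_left₀ (by linarith) (by positivity) (by norm_num)

theorem wallMajorant_nonneg (n : ℕ) : 0 ≤ wallMajorant n := by
  unfold wallMajorant; positivity

theorem one_div_two_mul_pow_five_le {x : ℝ} (hx : 1 < x) :
    1 / (2 * x ^ 5) ≤ 1 / (16 * (x - 1) ^ 4) - 1 / (16 * (x + 1) ^ 4) := by
  have hsq : 0 ≤ x ^ 2 - 1 := by nlinarith
  rw [div_sub_div _ _ (by positivity) (by positivity), div_le_div_iff₀ (by positivity) (by positivity)]
  -- after clearing denominators: `(x² - 1)⁴ ≤ x⁸ + x⁶`, whose gap is `(x² - 1)(5x⁴ - x² + 3) + 2`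
  nlinarith [mul_nonneg hsq (by nlinarith : (0:ℝ) ≤ 5 * x ^ 4 - x ^ 2 + 3)]

theorem succ_mul_wallTerm_le (n : ℕ) :
    (n + 1) * wallTerm n ≤ wallMajorant n - wallMajorant (n + 1) := by
  have hx : (1 : ℝ) < 2 * n + 2 := by linarith [(n.cast_nonneg : (0:ℝ) ≤ n)]
  calc (n + 1) * wallTerm n ≤ (n + 1) * (1 / (2 * n + 2) ^ 6) :=
        mul_le_mul_of_nonneg_left (sub_le_self _ (by positivity)) (by positivity)
    _ = 1 / (2 * (2 * n + 2) ^ 5) := by field_simp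
    _ ≤ 1 / (16 * ((2 * n + 2) - 1) ^ 4) - 1 / (16 * ((2 * n + 2) + 1) ^ 4) :=
        one_div_two_mul_pow_five_le hx
    _ = wallMajorant n - wallMajorant (n + 1) := by unfold wallMajorant; push_cast; ring_nf

theorem wallSeries_bounds :
    Summable (fun n : ℕ ↦ (n + 1) * wallTerm n) ∧
      0.0146 < ∑' n : ℕ, (n + 1) * wallTerm n ∧ ∑' n : ℕ, (n + 1) * wallTerm n < 0.0147 := by
  have hnonneg (n : ℕ) : 0 ≤ (n + 1) * wallTerm n := by have := wallTerm_pos n; positivity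
  have hsum := summable_of_le_sub_succ hnonneg wallMajorant_nonneg succ_mul_wallTerm_le
  have hsplit := hsum.sum_add_tsum_nat_add 3
  have htail_nonneg : 0 ≤ ∑' n : ℕ, ((n + 3 : ℕ) + 1) * wallTerm (n + 3) :=
    tsum_nonneg fun n ↦ hnonneg (n + 3)
  have htail_le : ∑' n : ℕ, ((n + 3 : ℕ) + 1) * wallTerm (n + 3) ≤ wallMajorant 3 :=
    tsum_le_of_le_sub_succ (fun n ↦ hnonneg (n + 3)) (fun n ↦ wallMajorant_nonneg (n + 3))
      fun n ↦ succ_mul_wallTerm_le (n + 3)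
  have hhead_lo : 0.0146 < ∑ n ∈ range 3, ((n : ℝ) + 1) * wallTerm n := by
    norm_num [sum_range_succ, wallTerm]
  have hhead_hi : ∑ n ∈ range 3, ((n : ℝ) + 1) * wallTerm n + wallMajorant 3 < 0.0147 := by
    norm_num [sum_range_succ, wallTerm, wallMajorant]
  rw [← hsplit]
  exact ⟨hsum, by linarith, by linarith⟩

/-- The double series `Σ_{r,s≥1} [1/(2r + 2s − 2)⁶ − 1/(2r + 2s − 1)⁶]` converges
(each bracketed term being positive) and its value lies strictly between
`0.0146` and `0.0147` (it is `0.0146637…`). -/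
theorem domain_wall_energy_difference :
    (∀ p : ℕ × ℕ,
      0 < 1 / (2 * ((p.1 : ℝ) + 1) + 2 * ((p.2 : ℝ) + 1) - 2) ^ 6
        - 1 / (2 * ((p.1 : ℝ) + 1) + 2 * ((p.2 : ℝ) + 1) - 1) ^ 6) ∧
    Summable (fun p : ℕ × ℕ =>
      1 / (2 * ((p.1 : ℝ) + 1) + 2 * ((p.2 : ℝ) + 1) - 2) ^ 6
        - 1 / (2 * ((p.1 : ℝ) + 1) + 2 * ((p.2 : ℝ) + 1) - 1) ^ 6) ∧
    0.0146 < ∑' p : ℕ × ℕ,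
        (1 / (2 * ((p.1 : ℝ) + 1) + 2 * ((p.2 : ℝ) + 1) - 2) ^ 6
          - 1 / (2 * ((p.1 : ℝ) + 1) + 2 * ((p.2 : ℝ) + 1) - 1) ^ 6) ∧
    (∑' p : ℕ × ℕ,
        (1 / (2 * ((p.1 : ℝ) + 1) + 2 * ((p.2 : ℝ) + 1) - 2) ^ 6
          - 1 / (2 * ((p.1 : ℝ) + 1) + 2 * ((p.2 : ℝ) + 1) - 1) ^ 6)) < 0.0147 := by
  have hsummand (p : ℕ × ℕ) :
      1 / (2 * ((p.1 : ℝ) + 1) + 2 * ((p.2 : ℝ) + 1) - 2) ^ 6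
        - 1 / (2 * ((p.1 : ℝ) + 1) + 2 * ((p.2 : ℝ) + 1) - 1) ^ 6 = wallTerm (p.1 + p.2) := by
    simp only [wallTerm]
    push_cast
    ring_nf
  obtain ⟨hsum, hlo, hhi⟩ := wallSeries_bounds
  have hprod := hsum.hasSum.prod_comp_add fun n ↦ (wallTerm_pos n).le
  simp only [hsummand]
  exact ⟨fun p ↦ wallTerm_pos _, hprod.summable, hprod.tsum_eq ▸ hlo, hprod.tsum_eq ▸ hhi⟩
end

section
/- The quantity Σ_{i=1}^∞ Σ_{j=1}^∞ [ 1/((2i−1)² + (2j−1)²)³ − 1/((2i)² + (2j)²)³ ] − 2·Σ_{i=1}^∞ 1/(2i)⁶ converges (the double series converging absolutely after pairing the bracketed terms) and its value lies strictly between 0.093 and 0.0935. -/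
set_option maxHeartbeats 2000000

open Finset Filter

noncomputable def gg (i : ℕ) : ℝ := 1 / (2 * (i : ℝ) + 1) ^ 3

noncomputable def ff (p : ℕ × ℕ) : ℝ :=
  1 / ((2 * ((p.1 : ℝ) + 1) - 1) ^ 2 + (2 * ((p.2 : ℝ) + 1) - 1) ^ 2) ^ 3
    - 1 / ((2 * ((p.1 : ℝ) + 1)) ^ 2 + (2 * ((p.2 : ℝ) + 1)) ^ 2) ^ 3

lemma gg_nonneg (i : ℕ) : 0 ≤ gg i := by unfold gg; positivity

lemma summable_sq : Summable (fun n : ℕ => 1 / ((n : ℝ) + 1) ^ 2) := by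
  have h : Summable (fun n : ℕ => 1 / ((n:ℝ)) ^ 2) := Real.summable_one_div_nat_pow.mpr one_lt_two
  have h2 : Summable (fun n : ℕ => 1 / ((n + 1 : ℕ) : ℝ) ^ 2) := (summable_nat_add_iff 1).mpr h
  exact h2.congr (fun n => by push_cast; ring)

lemma summable_gg : Summable gg := by
  refine Summable.of_nonneg_of_le (fun i => gg_nonneg i) (fun i => ?_) summable_sq
  unfold gg
  have hi : (0:ℝ) ≤ (i:ℝ) := Nat.cast_nonneg i
  rw [div_le_div_iff₀ (by positivity) (by positivity)]
  nlinarith [sq_nonneg ((i:ℝ))]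

lemma hasSum_telescope (c : ℝ) (hc : 1 ≤ c) :
    HasSum (fun k : ℕ => 1 / (((k : ℝ) + c) * ((k : ℝ) + c + 1))) (1 / c) := by
  have hsum : Summable (fun k : ℕ => 1 / (((k : ℝ) + c) * ((k : ℝ) + c + 1))) := by
    refine Summable.of_nonneg_of_le (fun k => by positivity) (fun k => ?_) summable_sq
    have hk : (0:ℝ) ≤ (k:ℝ) := Nat.cast_nonneg k
    rw [div_le_div_iff₀ (by positivity) (by positivity)]
    nlinarith
  rw [hsum.hasSum_iff_tendsto_nat]
  have hform : ∀ n : ℕ, ∑ k ∈ range n, (1 / (((k : ℝ) + c) * ((k : ℝ) + c + 1)))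
      = 1 / c - 1 / ((n : ℝ) + c) := by
    intro n
    rw [show 1 / c - 1 / ((n : ℝ) + c) =
        (fun m : ℕ => 1 / ((m : ℝ) + c)) 0 - (fun m : ℕ => 1 / ((m : ℝ) + c)) n by simp,
      ← Finset.sum_range_sub' (fun m : ℕ => 1 / ((m : ℝ) + c)) n]
    refine Finset.sum_congr rfl (fun k _ => ?_)
    have hk : (0:ℝ) ≤ (k:ℝ) := Nat.cast_nonneg k
    have h1 : ((k:ℝ) + c) ≠ 0 := by positivity
    have h2 : ((k:ℝ) + 1 + c) ≠ 0 := by positivity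
    push_cast
    rw [div_sub_div _ _ h1 h2, div_eq_div_iff (by positivity) (by positivity)]
    ring
  simp only [hform]
  have h0 : Tendsto (fun n : ℕ => 1 / ((n : ℝ) + c)) atTop (nhds 0) := by
    simp only [one_div]
    apply Filter.Tendsto.inv_tendsto_atTop
    exact tendsto_atTop_add_const_right _ c tendsto_natCast_atTop_atTop
  simpa using tendsto_const_nhds.sub h0

lemma summable_shift_sq (c : ℝ) (hc : 1 ≤ c) :
    Summable (fun k : ℕ => 1 / (((k : ℝ) + c) * ((k : ℝ) + c + 1))) :=
  (hasSum_telescope c hc).summable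

lemma tsum_telescope (c : ℝ) (hc : 1 ≤ c) :
    ∑' k : ℕ, 1 / (((k : ℝ) + c) * ((k : ℝ) + c + 1)) = 1 / c :=
  (hasSum_telescope c hc).tsum_eq

lemma tsum_gg_le : ∑' i, gg i ≤ ∑ i ∈ range 15, gg i + 1 / 1860 := by
  rw [← Summable.sum_add_tsum_nat_add 15 summable_gg]
  have hb : ∀ k : ℕ, gg (k + 15) ≤ 1/124 * (1 / (((k : ℝ) + 15) * ((k : ℝ) + 15 + 1))) := by
    intro k
    unfold gg
    have hk : (0:ℝ) ≤ (k:ℝ) := Nat.cast_nonneg k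
    push_cast
    rw [mul_one_div, div_le_div_iff₀ (by positivity) (by positivity)]
    nlinarith [mul_nonneg (mul_nonneg hk hk) hk, mul_nonneg hk hk]
  have hsum1 : Summable (fun k : ℕ => gg (k + 15)) := (summable_nat_add_iff 15).mpr summable_gg
  have hsum2 := (summable_shift_sq 15 (by norm_num)).mul_left (1/124 : ℝ)
  have := Summable.tsum_le_tsum hb hsum1 hsum2
  have heq : ∑' k : ℕ, 1/124 * (1 / (((k : ℝ) + 15) * ((k : ℝ) + 15 + 1))) = 1/124 * (1/15) := by
    rw [tsum_mul_left, tsum_telescope 15 (by norm_num)]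
  rw [heq] at this
  linarith

lemma ff_nonneg (p : ℕ × ℕ) : 0 ≤ ff p := by
  obtain ⟨i, j⟩ := p
  have hx : (0:ℝ) ≤ (i:ℝ) := Nat.cast_nonneg i
  have hy : (0:ℝ) ≤ (j:ℝ) := Nat.cast_nonneg j
  unfold ff
  simp only
  set x := (i:ℝ); set y := (j:ℝ)
  have ha : (0:ℝ) < (2*(x+1)-1)^2 + (2*(y+1)-1)^2 := by nlinarith
  have hab : (2*(x+1)-1)^2 + (2*(y+1)-1)^2 ≤ (2*(x+1))^2 + (2*(y+1))^2 := by nlinarith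
  have := one_div_le_one_div_of_le (pow_pos ha 3) (pow_le_pow_left₀ ha.le hab 3)
  linarith

lemma ff_le (p : ℕ × ℕ) : ff p ≤ (1/8 * gg p.1) * gg p.2 := by
  obtain ⟨i, j⟩ := p
  have hx : (0:ℝ) ≤ (i:ℝ) := Nat.cast_nonneg i
  have hy : (0:ℝ) ≤ (j:ℝ) := Nat.cast_nonneg j
  unfold ff gg
  simp only
  set x := (i:ℝ); set y := (j:ℝ)
  have e1 : (2*(x+1)-1)^2 + (2*(y+1)-1)^2 = (2*x+1)^2 + (2*y+1)^2 := by ring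
  rw [e1]
  have hu : (0:ℝ) < 2*x+1 := by linarith
  have hv : (0:ℝ) < 2*y+1 := by linarith
  have huv : 2*((2*x+1)*(2*y+1)) ≤ (2*x+1)^2 + (2*y+1)^2 := by nlinarith [sq_nonneg (2*x+1-(2*y+1))]
  have h8 : (2*((2*x+1)*(2*y+1)))^3 ≤ ((2*x+1)^2 + (2*y+1)^2)^3 :=
    pow_le_pow_left₀ (by positivity) huv 3
  have h1 : 1 / ((2*x+1)^2 + (2*y+1)^2)^3 ≤ 1 / (2*((2*x+1)*(2*y+1)))^3 :=
    one_div_le_one_div_of_le (by positivity) h8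
  have h2 : (1/8 * (1/(2*x+1)^3)) * (1/(2*y+1)^3) = 1 / (2*((2*x+1)*(2*y+1)))^3 := by
    field_simp; ring
  have h3 : (0:ℝ) ≤ 1 / ((2*(x+1))^2 + (2*(y+1))^2)^3 := by positivity
  rw [h2]
  linarith

lemma summable_GG : Summable (fun p : ℕ × ℕ => (1/8 * gg p.1) * gg p.2) :=
  Summable.mul_of_nonneg (summable_gg.mul_left (1/8)) summable_gg
    (fun i => by have := gg_nonneg i; positivity) (fun j => gg_nonneg j)

lemma summable_abs_ff : Summable (fun p : ℕ × ℕ => |ff p|) := by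
  refine Summable.of_nonneg_of_le (fun p => abs_nonneg _) (fun p => ?_) summable_GG
  rw [abs_of_nonneg (ff_nonneg p)]
  exact ff_le p

lemma summable_ff : Summable ff := summable_abs_ff.of_abs

lemma tsum_GG : ∑' p : ℕ × ℕ, (1/8 * gg p.1) * gg p.2 = 1/8 * (∑' i, gg i)^2 := by
  have hf : Summable (fun i : ℕ => ‖1/8 * gg i‖) := by
    refine (summable_gg.mul_left (1/8)).congr (fun i => ?_)
    rw [Real.norm_eq_abs, abs_of_nonneg (by have := gg_nonneg i; positivity)]
  have hg : Summable (fun i : ℕ => ‖gg i‖) := by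
    refine summable_gg.congr (fun i => ?_)
    rw [Real.norm_eq_abs, abs_of_nonneg (gg_nonneg i)]
  rw [← tsum_mul_tsum_of_summable_norm hf hg, tsum_mul_left]
  ring

lemma summable_T : Summable (fun i : ℕ => 1 / (2 * ((i : ℝ) + 1)) ^ 6) := by
  refine Summable.of_nonneg_of_le (fun i => by positivity) (fun i => ?_) summable_sq
  have hi : (0:ℝ) ≤ (i:ℝ) := Nat.cast_nonneg i
  rw [div_le_div_iff₀ (by positivity) (by positivity)]
  nlinarith [pow_le_pow_left₀ (by linarith : (0:ℝ) ≤ 1) (by linarith : (1:ℝ) ≤ (i:ℝ)+1) 4,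
    sq_nonneg ((i:ℝ)+1)]

lemma tsum_T_le :
    ∑' i : ℕ, 1 / (2 * ((i : ℝ) + 1)) ^ 6 ≤ (∑ i ∈ range 5, 1 / (2 * ((i : ℝ) + 1)) ^ 6) + 1/414720 := by
  rw [← Summable.sum_add_tsum_nat_add 5 summable_T]
  have hb : ∀ k : ℕ, 1 / (2 * (((k + 5 : ℕ) : ℝ) + 1)) ^ 6
      ≤ 1/82944 * (1 / (((k : ℝ) + 5) * ((k : ℝ) + 5 + 1))) := by
    intro k
    have hk : (0:ℝ) ≤ (k:ℝ) := Nat.cast_nonneg k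
    push_cast
    rw [mul_one_div, div_le_div_iff₀ (by positivity) (by positivity)]
    have h64 : (6:ℝ)^4 ≤ ((k:ℝ)+6)^4 :=
      pow_le_pow_left₀ (by norm_num) (by linarith) 4
    have h2 : 1296*((k:ℝ)+6)^2 ≤ ((k:ℝ)+6)^4*((k:ℝ)+6)^2 := by nlinarith [sq_nonneg ((k:ℝ)+6)]
    nlinarith [h2, hk]
  have hsum1 : Summable (fun k : ℕ => 1 / (2 * (((k + 5 : ℕ) : ℝ) + 1)) ^ 6) :=
    (summable_nat_add_iff 5).mpr summable_T
  have hsum2 := (summable_shift_sq 5 (by norm_num)).mul_left (1/82944 : ℝ)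
  have h := Summable.tsum_le_tsum hb hsum1 hsum2
  have heq : ∑' k : ℕ, 1/82944 * (1 / (((k : ℝ) + 5) * ((k : ℝ) + 5 + 1))) = 1/82944 * (1/5) := by
    rw [tsum_mul_left, tsum_telescope 5 (by norm_num)]
  rw [heq] at h
  have : (1:ℝ)/82944 * (1/5) ≤ 1/414720 := by norm_num
  linarith

lemma P_bounds : ∑ i ∈ range 15, gg i < 1.052 := by
  unfold gg
  simp only [Finset.sum_range_succ, Finset.sum_range_zero]
  norm_num

lemma T5_lo : (0.0158953 : ℝ) < ∑ i ∈ range 5, 1 / (2 * ((i : ℝ) + 1)) ^ 6 := by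
  simp only [Finset.sum_range_succ, Finset.sum_range_zero]
  norm_num

lemma T5_hi : (∑ i ∈ range 5, 1 / (2 * ((i : ℝ) + 1)) ^ 6) < 0.01589539 := by
  simp only [Finset.sum_range_succ, Finset.sum_range_zero]
  norm_num

lemma Q_lo : (0.125089 : ℝ) < ∑ p ∈ (range 15) ×ˢ (range 15), ff p := by
  rw [Finset.sum_product]
  unfold ff
  simp only [Finset.sum_range_succ, Finset.sum_range_zero]
  norm_num

lemma Q_hi : (∑ p ∈ (range 15) ×ˢ (range 15), ff p) < 0.1250893 := by
  rw [Finset.sum_product]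
  unfold ff
  simp only [Finset.sum_range_succ, Finset.sum_range_zero]
  norm_num

lemma GG_square : ∑ p ∈ (range 15) ×ˢ (range 15), (1/8 * gg p.1) * gg p.2
    = 1/8 * (∑ i ∈ range 15, gg i)^2 := by
  rw [Finset.sum_product]
  dsimp only
  rw [← Finset.sum_mul_sum, ← Finset.mul_sum]
  ring

/-- The large-`q` limit of the corner interaction-energy difference `ℐ_C`:
`Σ_{i,j≥1} [1/((2i−1)² + (2j−1)²)³ − 1/((2i)² + (2j)²)³] − 2·Σ_{i≥1} 1/(2i)⁶`
converges (the paired double series converging absolutely) and lies strictly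
between `0.093` and `0.0935` (its value is `0.0932973…`). -/
theorem corner_interaction_difference :
    Summable (fun p : ℕ × ℕ =>
      |1 / ((2 * ((p.1 : ℝ) + 1) - 1) ^ 2 + (2 * ((p.2 : ℝ) + 1) - 1) ^ 2) ^ 3
        - 1 / ((2 * ((p.1 : ℝ) + 1)) ^ 2 + (2 * ((p.2 : ℝ) + 1)) ^ 2) ^ 3|) ∧
    Summable (fun i : ℕ => 1 / (2 * ((i : ℝ) + 1)) ^ 6) ∧
    0.093 < (∑' p : ℕ × ℕ,
        (1 / ((2 * ((p.1 : ℝ) + 1) - 1) ^ 2 + (2 * ((p.2 : ℝ) + 1) - 1) ^ 2) ^ 3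
          - 1 / ((2 * ((p.1 : ℝ) + 1)) ^ 2 + (2 * ((p.2 : ℝ) + 1)) ^ 2) ^ 3))
      - 2 * ∑' i : ℕ, 1 / (2 * ((i : ℝ) + 1)) ^ 6 ∧
    (∑' p : ℕ × ℕ,
        (1 / ((2 * ((p.1 : ℝ) + 1) - 1) ^ 2 + (2 * ((p.2 : ℝ) + 1) - 1) ^ 2) ^ 3
          - 1 / ((2 * ((p.1 : ℝ) + 1)) ^ 2 + (2 * ((p.2 : ℝ) + 1)) ^ 2) ^ 3))
      - 2 * (∑' i : ℕ, 1 / (2 * ((i : ℝ) + 1)) ^ 6) < 0.0935 := by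
  have hfe : (fun p : ℕ × ℕ =>
      1 / ((2 * ((p.1 : ℝ) + 1) - 1) ^ 2 + (2 * ((p.2 : ℝ) + 1) - 1) ^ 2) ^ 3
        - 1 / ((2 * ((p.1 : ℝ) + 1)) ^ 2 + (2 * ((p.2 : ℝ) + 1)) ^ 2) ^ 3) = ff := rfl
  refine ⟨summable_abs_ff, summable_T, ?_, ?_⟩ <;> rw [hfe]
  · -- lower bound
    have hsplit := Summable.sum_add_tsum_compl (s := (range 15) ×ˢ (range 15)) summable_ff
    have htail : (0:ℝ) ≤ ∑' p : ↑(↑((range 15) ×ˢ (range 15)) : Set (ℕ × ℕ))ᶜ, ff p :=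
      tsum_nonneg (fun p => ff_nonneg p)
    have hS : (0.125089 : ℝ) < ∑' p : ℕ × ℕ, ff p := by
      have := Q_lo; linarith
    have hT : ∑' i : ℕ, 1 / (2 * ((i : ℝ) + 1)) ^ 6 < 0.0158979 := by
      have := tsum_T_le; have := T5_hi; linarith
    linarith
  · -- upper bound
    have hsplitF := Summable.sum_add_tsum_compl (s := (range 15) ×ˢ (range 15)) summable_ff
    have hsplitG := Summable.sum_add_tsum_compl (s := (range 15) ×ˢ (range 15)) summable_GG
    have hcompl : (∑' p : ↑(↑((range 15) ×ˢ (range 15)) : Set (ℕ × ℕ))ᶜ, ff p)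
        ≤ ∑' p : ↑(↑((range 15) ×ˢ (range 15)) : Set (ℕ × ℕ))ᶜ, (1/8 * gg (p : ℕ × ℕ).1) * gg (p : ℕ × ℕ).2 :=
      Summable.tsum_le_tsum (fun p => ff_le p) (summable_ff.subtype _) (summable_GG.subtype _)
    have hP0 : (0:ℝ) ≤ ∑ i ∈ range 15, gg i := Finset.sum_nonneg (fun i _ => gg_nonneg i)
    have hg0 : (0:ℝ) ≤ ∑' i, gg i := tsum_nonneg gg_nonneg
    have hgsq : (∑' i, gg i)^2 ≤ ((∑ i ∈ range 15, gg i) + 1/1860)^2 :=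
      pow_le_pow_left₀ hg0 tsum_gg_le 2
    have hGval : ∑' p : ℕ × ℕ, (1/8 * gg p.1) * gg p.2 = 1/8 * (∑' i, gg i)^2 := tsum_GG
    have hGsq := GG_square
    have hP := P_bounds
    have hT : (0.0158953 : ℝ) < ∑' i : ℕ, 1 / (2 * ((i : ℝ) + 1)) ^ 6 := by
      have h1 := Summable.sum_le_tsum (range 5) (fun i _ => by positivity) summable_T
      have := T5_lo; linarith
    have hQ := Q_hi
    nlinarith [hsplitF, hsplitG, hcompl, hgsq, hGval, hGsq]
end
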